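/- Let p be a prime, k a field of characteristic p, and M a k-module. Suppose ∂_t, ∂_q, σ are k-linear endomorphisms of M such that ∂_q∘σ = σ∘∂_q and ∂_t∘σ − σ∘∂_t = id_M. Then (∂_t+∂_q)∘σ − σ∘(∂_t+∂_q) = id_M, and consequently ∑_{i=0}^{p−1} (∂_t+∂_q)^{i} ∘ (−σ^{p−1}) ∘ (∂_t+∂_q)^{p−1−i} = id_M. (If a p-complex of H_q-modules is contractible via an H_q-linear homotopy, then its totalization with total differential ∂_T = ∂_t + ∂_q is acyclic.) -/

import Mathlib

/-!
The commutator is bilinear, so `[∂_t + ∂_q, σ] = [∂_t, σ] + [∂_q, σ] = 1`. For `[D, s] = 1` the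
operator `ad D = L_D - R_D` acts on powers of `s` as a derivative, `ad D (s ^ n) = n s ^ (n - 1)`,
so `(ad D) ^ (p - 1) (s ^ (p - 1)) = (p - 1)! = -1` by Wilson's theorem. Since `L_D` and `R_D`
commute and `(-1) ^ (p - 1 - i) * C(p - 1, i) ≡ 1 [MOD p]`, the binomial theorem gives
`(ad D) ^ (p - 1) = ∑ i < p, L_D ^ i R_D ^ (p - 1 - i)`, whose value at `s ^ (p - 1)` is the sum
`∑ i < p, D ^ i s ^ (p - 1) D ^ (p - 1 - i)`.
-/

open Finset

theorem ZMod.choose_pred_eq_neg_one_pow {p : ℕ} (hp : p.Prime) {m : ℕ} (hm : m ≤ p - 1) :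
    ((p - 1).choose m : ZMod p) = (-1) ^ m := by
  induction m with
  | zero => simp
  | succ m ih =>
    have hpascal : p.choose (m + 1) = (p - 1).choose m + (p - 1).choose (m + 1) := by
      rw [← Nat.choose_succ_succ', Nat.sub_add_cancel hp.one_le]
    have hdvd : ((p.choose (m + 1) : ℕ) : ZMod p) = 0 :=
      (ZMod.natCast_eq_zero_iff _ _).mpr (hp.dvd_choose_self m.succ_ne_zero (by omega))
    rw [hpascal, Nat.cast_add, ih (by omega)] at hdvd
    rw [pow_succ]
    linear_combination hdvd

theorem ZMod.neg_one_pow_mul_choose_pred {p : ℕ} (hp : p.Prime) {m : ℕ} (hm : m ≤ p - 1) :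
    (-1) ^ (p - 1 - m) * ((p - 1).choose m : ZMod p) = 1 := by
  have := Fact.mk hp
  rw [ZMod.choose_pred_eq_neg_one_pow hp hm, ← pow_add, Nat.sub_add_cancel hm,
    ZMod.pow_card_sub_one_eq_one (neg_ne_zero.mpr one_ne_zero)]

section

variable {p : ℕ} {A : Type*} [Ring A]

theorem Commute.sub_pow_pred_eq_geom_sum₂ (k : Type*) [CommRing k] [CharP k p] [Algebra k A]
    (hp : p.Prime) {x y : A} (h : Commute x y) :
    (x - y) ^ (p - 1) = ∑ i ∈ range p, x ^ i * y ^ (p - 1 - i) := by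
  rw [sub_eq_add_neg, h.neg_right.add_pow, Nat.sub_add_cancel hp.one_le]
  refine sum_congr rfl fun m hm => ?_
  have hc : (-1) ^ (p - 1 - m) * ((p - 1).choose m : A) = 1 := by
    simpa using congrArg ((algebraMap k A).comp (ZMod.castHom dvd_rfl k))
      (ZMod.neg_one_pow_mul_choose_pred hp (Nat.le_sub_one_of_lt (mem_range.mp hm)))
  rw [neg_pow, mul_assoc, mul_assoc, ← (Nat.cast_commute _ _).eq, ← mul_assoc ((-1) ^ _), hc,
    one_mul]

theorem factorial_pred_eq_neg_one (k : Type*) [CommRing k] [CharP k p] [Algebra k A]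
    (hp : p.Prime) : ((p - 1).factorial : A) = -1 := by
  have := Fact.mk hp
  simpa only [map_natCast, map_neg, map_one] using
    congrArg ((algebraMap k A).comp (ZMod.castHom dvd_rfl k)) (ZMod.wilsons_lemma (p := p))

theorem mul_pow_succ_sub_pow_succ_mul {D s : A} (h : D * s - s * D = 1) (n : ℕ) :
    D * s ^ (n + 1) - s ^ (n + 1) * D = (n + 1) * s ^ n := by
  induction n with
  | zero => simpa using h
  | succ n ih =>
    calc D * s ^ (n + 2) - s ^ (n + 2) * D
        = (D * s ^ (n + 1) - s ^ (n + 1) * D) * s + s ^ (n + 1) * (D * s - s * D) := by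
          rw [pow_succ s (n + 1)]; noncomm_ring
      _ = ((n + 1 : ℕ) + 1) * s ^ (n + 1) := by
          rw [ih, h, mul_one, mul_assoc, ← pow_succ, Nat.cast_succ, add_one_mul (_ + 1 : A)]

theorem mulLeft_sub_mulRight_pow_apply_pow (R : Type*) [CommRing R] [Algebra R A] {D s : A}
    (h : D * s - s * D = 1) (n : ℕ) :
    ((LinearMap.mulLeft R D - LinearMap.mulRight R D) ^ n) (s ^ n) = n.factorial := by
  induction n with
  | zero => simp
  | succ n ih =>
    rw [pow_succ, Module.End.mul_apply, LinearMap.sub_apply, LinearMap.mulLeft_apply,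
      LinearMap.mulRight_apply, mul_pow_succ_sub_pow_succ_mul h, ← Nat.cast_succ, ← nsmul_eq_mul,
      map_nsmul, ih, nsmul_eq_mul, ← Nat.cast_mul, ← Nat.factorial_succ]

theorem sum_pow_mul_pow_pred_mul_pow_eq_neg_one (k : Type*) [CommRing k] [CharP k p]
    [Algebra k A] (hp : p.Prime) {D s : A} (h : D * s - s * D = 1) :
    ∑ i ∈ range p, D ^ i * s ^ (p - 1) * D ^ (p - 1 - i) = -1 :=
  calc ∑ i ∈ range p, D ^ i * s ^ (p - 1) * D ^ (p - 1 - i)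
      = ((LinearMap.mulLeft k D - LinearMap.mulRight k D) ^ (p - 1)) (s ^ (p - 1)) := by
        rw [(LinearMap.commute_mulLeft_right D D).sub_pow_pred_eq_geom_sum₂ k hp,
          LinearMap.sum_apply]
        simp only [Module.End.mul_apply, LinearMap.pow_mulLeft, LinearMap.pow_mulRight,
          LinearMap.mulLeft_apply, LinearMap.mulRight_apply, mul_assoc]
    _ = ((p - 1).factorial : A) := mulLeft_sub_mulRight_pow_apply_pow k h (p - 1)
    _ = -1 := factorial_pred_eq_neg_one k hp

end

theorem stmt_14 (p : ℕ) (hp : p.Prime) (k : Type*) [Field k] [CharP k p]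
    (M : Type*) [AddCommGroup M] [Module k M]
    (dt dq σ : Module.End k M)
    (h1 : dq * σ = σ * dq) (h2 : dt * σ - σ * dt = 1) :
    (dt + dq) * σ - σ * (dt + dq) = 1 ∧
      (Finset.range p).sum
        (fun i => (dt + dq) ^ i * (-(σ ^ (p - 1))) * (dt + dq) ^ (p - 1 - i)) = 1 := by
  have hcomm : (dt + dq) * σ - σ * (dt + dq) = 1 :=
    calc (dt + dq) * σ - σ * (dt + dq) = (dt * σ - σ * dt) + (dq * σ - σ * dq) := by
          noncomm_ring
      _ = 1 := by rw [h2, h1, sub_self, add_zero]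
  refine ⟨hcomm, ?_⟩
  simp only [mul_neg, neg_mul, sum_neg_distrib]
  rw [sum_pow_mul_pow_pred_mul_pow_eq_neg_one k hp hcomm, neg_neg]
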